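/- Let n ≥ 2, u ∈ ℝ, ε ∈ ℝ, and let H be the boundary-symmetric Hubbard Hamiltonian on (ℂ²⊗ℂ²)^{⊗n}. Let J = {0,+,−,z}. Suppose Ω_n ∈ End((ℂ²⊗ℂ²)^{⊗n}) admits expansions Ω_n = Σ_{s,t ∈ J} (σ^s τ^t) ⊗ P^{s,t} (first tensor factor = site 1) and Ω_n = Σ_{s,t ∈ J} Q^{s,t} ⊗ (σ^s τ^t) (last tensor factor = site n) with P^{s,t}, Q^{s,t} ∈ End((ℂ²⊗ℂ²)^{⊗(n−1)}), such that: (a) P^{s,t} = 0 whenever s ∈ {−,z} or t ∈ {−,z}; (b) Q^{s,t} = 0 whenever s ∈ {+,z} or t ∈ {+,z}; (c) [H, Ω_n] = −iε·Σ_{s ∈ {0,+}} ( σᶻτ^s ⊗ P^{0,s} + σ^sτᶻ ⊗ P^{s,0} − Q^{0,−s} ⊗ σᶻτ^{−s} − Q^{−s,0} ⊗ σ^{−s}τᶻ ), where −0 := 0 and −(+) := −. Then R := Ω_n Ω_n† satisfies −i[H, R] + ε·( D_{σ⁺₁}(R) + D_{τ⁺₁}(R) + D_{σ⁻ₙ}(R)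 + D_{τ⁻ₙ}(R) ) = 0. -/

import Mathlib

open Matrix Kronecker

noncomputable section

abbrev M2 : Type := Matrix (Fin 2) (Fin 2) ℂ
abbrev M4 : Type := Matrix (Fin 2 × Fin 2) (Fin 2 × Fin 2) ℂ

def σx : M2 := !![0, 1; 1, 0]
def σy : M2 := !![0, -Complex.I; Complex.I, 0]
def σz : M2 := !![1, 0; 0, -1]
def σ0 : M2 := 1
def σp : M2 := (1/2 : ℂ) • (σx + Complex.I • σy)
def σm : M2 := (1/2 : ℂ) • (σx - Complex.I • σy)

/-- Operators on the Hubbard ladder `(ℂ²⊗ℂ²)^{⊗n}`: each site carries a σ-qubit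
(first component) and a τ-qubit (second component). -/
abbrev HChainOp (n : ℕ) : Type := Matrix (Fin n → Fin 2 × Fin 2) (Fin n → Fin 2 × Fin 2) ℂ

/-- `σ^a` acting on the σ-qubit of site `x` (identity elsewhere). -/
def hsiteσ {n : ℕ} (x : Fin n) (a : M2) : HChainOp n :=
  Matrix.of fun i j =>
    a (i x).1 (j x).1 * (if (i x).2 = (j x).2 then (1:ℂ) else 0)
      * ∏ y ∈ Finset.univ.filter (fun y => y ≠ x), (if i y = j y then (1:ℂ) else 0)

/-- `τ^a` acting on the τ-qubit of site `x` (identity elsewhere). -/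
def hsiteτ {n : ℕ} (x : Fin n) (a : M2) : HChainOp n :=
  Matrix.of fun i j =>
    a (i x).2 (j x).2 * (if (i x).1 = (j x).1 then (1:ℂ) else 0)
      * ∏ y ∈ Finset.univ.filter (fun y => y ≠ x), (if i y = j y then (1:ℂ) else 0)

/-- The boundary-symmetric Hubbard Hamiltonian
`H = Σ_x (2σ⁺ₓσ⁻_{x+1}+2σ⁻ₓσ⁺_{x+1}+2τ⁺ₓτ⁻_{x+1}+2τ⁻ₓτ⁺_{x+1}) + u Σ_x σᶻₓτᶻₓ`. -/
def Hubbard (u : ℂ) (n : ℕ) : HChainOp n :=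
  (∑ x : Fin n,
    if h : (x : ℕ) + 1 < n then
      (2:ℂ) • (hsiteσ x σp * hsiteσ ⟨(x:ℕ)+1, h⟩ σm)
        + (2:ℂ) • (hsiteσ x σm * hsiteσ ⟨(x:ℕ)+1, h⟩ σp)
        + (2:ℂ) • (hsiteτ x σp * hsiteτ ⟨(x:ℕ)+1, h⟩ σm)
        + (2:ℂ) • (hsiteτ x σm * hsiteτ ⟨(x:ℕ)+1, h⟩ σp)
    else 0)
  + u • ∑ x : Fin n, hsiteσ x σz * hsiteτ x σz

/-- The Lindblad dissipator `D_L(ρ) = 2LρL† − L†Lρ − ρL†L`. -/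
def hDissip {n : ℕ} (L ρ : HChainOp n) : HChainOp n :=
  (2:ℂ) • (L * ρ * Lᴴ) - Lᴴ * L * ρ - ρ * (Lᴴ * L)

/-- `a ⊗ B` : a one-site (4-dim) operator tensored with an operator on the remaining sites. -/
def htensL {m : ℕ} (a : M4) (B : HChainOp m) : HChainOp (m+1) :=
  Matrix.of fun i j => a (i 0) (j 0) * B (fun y => i y.succ) (fun y => j y.succ)

/-- `B ⊗ a` : an operator on the first `m` sites tensored with a one-site operator. -/
def htensR {m : ℕ} (B : HChainOp m) (a : M4) : HChainOp (m+1) :=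
  Matrix.of fun i j =>
    B (fun y => i y.castSucc) (fun y => j y.castSucc) * a (i (Fin.last m)) (j (Fin.last m))

/-- The Pauli operators indexed by `J = {0, +, −, z}`
(so `0 ↦ σ⁰`, `1 ↦ σ⁺`, `2 ↦ σ⁻`, `3 ↦ σᶻ`, and `−0 = 0`, `−(+) = −`). -/
def pauliJ : Fin 4 → M2 := ![σ0, σp, σm, σz]

/-!
Since `H` is Hermitian, `[H, ΩΩ†] = [H, Ω]Ω† - Ω[H, Ω]†`. If a jump operator `L` commutes with `Ω`,
then `D_L(ΩΩ†) = d_L(Ω)Ω† + Ω d_L(Ω)†` with `d_L(Ω) = Ω LL† - L†L Ω` (`drift`).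
The triangularity conditions say that only `σ⁰, σ⁺` occur at site 1 and only `σ⁰, σ⁻` at site `n`,
so `σ⁺₁, τ⁺₁, σ⁻ₙ, τ⁻ₙ` commute with `Ω`, and since `d_{σ⁺}(σ⁰) = σᶻ`, `d_{σ⁺}(σ⁺) = 0`,
`d_{σ⁻}(σ⁰) = -σᶻ`, `d_{σ⁻}(σ⁻) = 0`, the four drifts add up to the boundary term `S` of the bulk
relation `[H, Ω] = -iεS`. Then `-i[H, R] = -ε(SΩ† + ΩS†)`, which cancels the dissipators.
-/

section StarAlgebra

variable {A : Type*} [Ring A] [StarRing A]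

def drift (L X : A) : A := X * (L * star L) - star L * L * X

lemma drift_add (L X Y : A) : drift L (X + Y) = drift L X + drift L Y := by
  simp only [drift]; noncomm_ring

lemma commutator_mul_star {H : A} (hH : IsSelfAdjoint H) (X : A) :
    H * (X * star X) - X * star X * H = (H * X - X * H) * star X - X * star (H * X - X * H) := by
  rw [star_sub, star_mul, star_mul, hH.star_eq]; noncomm_ring

lemma stationary_of_commutator_eq [Algebra ℂ A] [StarModule ℂ A] {H X S D : A}
    (hH : IsSelfAdjoint H) (ε : ℝ) (hbulk : H * X - X * H = (-Complex.I * ε) • S)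
    (hD : D = S * star X + X * star S) :
    (-Complex.I) • (H * (X * star X) - X * star X * H) + (ε : ℂ) • D = 0 := by
  have hconj : star (-Complex.I * ε) = Complex.I * ε := by simp
  have h1 : -Complex.I * (-Complex.I * ε) = -ε := by ring_nf; simp
  have h2 : -Complex.I * (Complex.I * ε) = ε := by ring_nf; simp
  rw [hD, commutator_mul_star hH, hbulk, star_smul, hconj, smul_mul_assoc, mul_smul_comm,
    smul_sub, smul_smul, smul_smul, smul_add, h1, h2, neg_smul]
  abel

end StarAlgebra

lemma hDissip_mul_conjTranspose {n : ℕ} {L X : HChainOp n} (h : Commute L X) :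
    hDissip L (X * Xᴴ) = drift L X * Xᴴ + X * (drift L X)ᴴ := by
  have hstar : Xᴴ * Lᴴ = Lᴴ * Xᴴ := by rw [← conjTranspose_mul, ← conjTranspose_mul, h.eq]
  have hjump : L * (X * Xᴴ) * Lᴴ = X * (L * Lᴴ) * Xᴴ := by
    rw [← mul_assoc, h.eq, mul_assoc, mul_assoc, hstar, mul_assoc, mul_assoc]
  simp only [hDissip, hjump, drift, star_eq_conjTranspose, conjTranspose_sub, conjTranspose_mul,
    conjTranspose_conjTranspose, two_smul]
  noncomm_ring

section Kronecker

variable {R l m : Type*} [CommRing R]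

lemma sub_kronecker (a b : Matrix l l R) (c : Matrix m m R) :
    (a - b) ⊗ₖ c = a ⊗ₖ c - b ⊗ₖ c := by
  ext; simp [sub_mul]

lemma kronecker_sub (a : Matrix l l R) (b c : Matrix m m R) :
    a ⊗ₖ (b - c) = a ⊗ₖ b - a ⊗ₖ c := by
  ext; simp [mul_sub]

lemma neg_kronecker (a : Matrix l l R) (b : Matrix m m R) : (-a) ⊗ₖ b = -(a ⊗ₖ b) := by
  ext; simp

lemma kronecker_neg (a : Matrix l l R) (b : Matrix m m R) : a ⊗ₖ (-b) = -(a ⊗ₖ b) := by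
  ext; simp

lemma commute_kronecker [Fintype l] [Fintype m] {a c : Matrix l l R} {b d : Matrix m m R}
    (hac : Commute a c) (hbd : Commute b d) : Commute (a ⊗ₖ b) (c ⊗ₖ d) := by
  rw [Commute, SemiconjBy, ← mul_kronecker_mul, ← mul_kronecker_mul, hac.eq, hbd.eq]

lemma drift_kronecker_one [StarRing R] [Fintype l] [DecidableEq l] [Fintype m] [DecidableEq m]
    (ℓ a : Matrix l l R) (b : Matrix m m R) :
    drift (ℓ ⊗ₖ (1 : Matrix m m R)) (a ⊗ₖ b) = drift ℓ a ⊗ₖ b := by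
  simp only [drift, star_eq_conjTranspose, conjTranspose_kronecker, conjTranspose_one,
    ← mul_kronecker_mul, mul_one, one_mul, sub_kronecker]

lemma drift_one_kronecker [StarRing R] [Fintype l] [DecidableEq l] [Fintype m] [DecidableEq m]
    (ℓ b : Matrix m m R) (a : Matrix l l R) :
    drift ((1 : Matrix l l R) ⊗ₖ ℓ) (a ⊗ₖ b) = a ⊗ₖ drift ℓ b := by
  simp only [drift, star_eq_conjTranspose, conjTranspose_kronecker, conjTranspose_one,
    ← mul_kronecker_mul, mul_one, one_mul, kronecker_sub]

end Kronecker

lemma σp_eq : σp = !![0, 1; 0, 0] := by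
  ext i j; fin_cases i <;> fin_cases j <;> norm_num [σp, σx, σy, Complex.ext_iff]

lemma σm_eq : σm = !![0, 0; 1, 0] := by
  ext i j; fin_cases i <;> fin_cases j <;> norm_num [σm, σx, σy, Complex.ext_iff]

lemma σp_conjTranspose : σpᴴ = σm := by
  rw [σp_eq, σm_eq]; ext i j; fin_cases i <;> fin_cases j <;> simp

lemma σm_conjTranspose : σmᴴ = σp := by
  rw [σp_eq, σm_eq]; ext i j; fin_cases i <;> fin_cases j <;> simp

lemma σz_conjTranspose : σzᴴ = σz := by
  ext i j; fin_cases i <;> fin_cases j <;> simp [σz]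

lemma drift_σp_σ0 : drift σp σ0 = σz := by
  rw [drift, star_eq_conjTranspose, σp_conjTranspose, σp_eq, σm_eq, σ0, σz]
  simp [Matrix.one_fin_two]

lemma drift_σp_σp : drift σp σp = 0 := by
  rw [drift, star_eq_conjTranspose, σp_conjTranspose, σp_eq, σm_eq]
  ext i j; fin_cases i <;> fin_cases j <;> simp

lemma drift_σm_σ0 : drift σm σ0 = -σz := by
  rw [drift, star_eq_conjTranspose, σm_conjTranspose, σp_eq, σm_eq, σ0, σz]
  simp [Matrix.one_fin_two]

lemma drift_σm_σm : drift σm σm = 0 := by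
  rw [drift, star_eq_conjTranspose, σm_conjTranspose, σp_eq, σm_eq]
  ext i j; fin_cases i <;> fin_cases j <;> simp

section PiKron

variable {ι κ R : Type*} [Fintype ι] [CommSemiring R]

def piKron (f : ι → Matrix κ κ R) : Matrix (ι → κ) (ι → κ) R :=
  Matrix.of fun i j => ∏ y, f y (i y) (j y)

lemma piKron_mul [DecidableEq ι] [Fintype κ] (f g : ι → Matrix κ κ R) :
    piKron f * piKron g = piKron (f * g) := by
  ext i j
  simp only [piKron, Matrix.mul_apply, Matrix.of_apply, Pi.mul_apply, Finset.prod_univ_sum,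
    Fintype.piFinset_univ, Finset.prod_mul_distrib]

lemma piKron_conjTranspose [StarRing R] (f : ι → Matrix κ κ R) :
    (piKron f)ᴴ = piKron fun y => (f y)ᴴ := by
  ext i j; simp [piKron, Matrix.conjTranspose_apply]

lemma piKron_one [DecidableEq κ] : piKron (1 : ι → Matrix κ κ R) = 1 := by
  ext i j
  simp [piKron, Matrix.one_apply, Finset.prod_boole, funext_iff]

lemma commute_piKron_mulSingle [DecidableEq ι] [Fintype κ] [DecidableEq κ] {x y : ι}
    (hxy : x ≠ y) (a b : Matrix κ κ R) :
    Commute (piKron (Pi.mulSingle x a)) (piKron (Pi.mulSingle y b)) := by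
  rw [Commute, SemiconjBy, piKron_mul, piKron_mul]
  exact congrArg piKron (Pi.mulSingle_commute (f := fun _ => Matrix κ κ R) hxy a b).eq

lemma commute_piKron_mulSingle_same [DecidableEq ι] [Fintype κ] [DecidableEq κ] (x : ι)
    {a b : Matrix κ κ R} (h : Commute a b) :
    Commute (piKron (Pi.mulSingle x a)) (piKron (Pi.mulSingle x b)) := by
  rw [Commute, SemiconjBy, piKron_mul, piKron_mul, ← Pi.mulSingle_mul, ← Pi.mulSingle_mul, h.eq]

end PiKron

lemma hsiteσ_eq_piKron {n : ℕ} (x : Fin n) (a : M2) :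
    hsiteσ x a = piKron (Pi.mulSingle x (a ⊗ₖ 1)) := by
  ext i j
  have hrest : ∀ y ∈ Finset.univ.erase x,
      (Pi.mulSingle x (a ⊗ₖ 1) : Fin n → M4) y (i y) (j y) = if i y = j y then 1 else 0 :=
    fun y hy => by rw [Pi.mulSingle_eq_of_ne (Finset.ne_of_mem_erase hy), Matrix.one_apply]
  rw [piKron, Matrix.of_apply, ← Finset.mul_prod_erase _ _ (Finset.mem_univ x),
    Finset.prod_congr rfl hrest]
  simp [hsiteσ, Matrix.one_apply, Finset.filter_ne']

lemma hsiteτ_eq_piKron {n : ℕ} (x : Fin n) (a : M2) :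
    hsiteτ x a = piKron (Pi.mulSingle x (1 ⊗ₖ a)) := by
  ext i j
  have hrest : ∀ y ∈ Finset.univ.erase x,
      (Pi.mulSingle x (1 ⊗ₖ a) : Fin n → M4) y (i y) (j y) = if i y = j y then 1 else 0 :=
    fun y hy => by rw [Pi.mulSingle_eq_of_ne (Finset.ne_of_mem_erase hy), Matrix.one_apply]
  rw [piKron, Matrix.of_apply, ← Finset.mul_prod_erase _ _ (Finset.mem_univ x),
    Finset.prod_congr rfl hrest]
  simp [hsiteτ, Matrix.one_apply, Finset.filter_ne']

section Tensor

variable {m : ℕ}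

lemma htensL_mul (a a' : M4) (B B' : HChainOp m) :
    htensL a B * htensL a' B' = htensL (a * a') (B * B') := by
  ext i j
  rw [mul_apply, ← (Fin.consEquiv fun _ => Fin 2 × Fin 2).sum_comp, Fintype.sum_prod_type]
  simp only [htensL, of_apply, Fin.consEquiv_apply, Fin.cons_zero, Fin.cons_succ, mul_apply,
    Finset.sum_mul_sum]
  exact Finset.sum_congr rfl fun _ _ => Finset.sum_congr rfl fun _ _ => by ring

lemma htensR_mul (a a' : M4) (B B' : HChainOp m) :
    htensR B a * htensR B' a' = htensR (B * B') (a * a') := by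
  ext i j
  rw [mul_apply, ← (Fin.snocEquiv fun _ => Fin 2 × Fin 2).sum_comp, Fintype.sum_prod_type,
    Finset.sum_comm]
  simp only [htensR, of_apply, Fin.snocEquiv_apply, Fin.snoc_last, Fin.snoc_castSucc, mul_apply,
    Finset.sum_mul_sum]
  exact Finset.sum_congr rfl fun _ _ => Finset.sum_congr rfl fun _ _ => by ring

lemma htensL_conjTranspose (a : M4) (B : HChainOp m) : (htensL a B)ᴴ = htensL aᴴ Bᴴ := by
  ext i j; simp [htensL]

lemma htensR_conjTranspose (a : M4) (B : HChainOp m) : (htensR B a)ᴴ = htensR Bᴴ aᴴ := by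
  ext i j; simp [htensR]

lemma htensL_sub_left (a a' : M4) (B : HChainOp m) :
    htensL (a - a') B = htensL a B - htensL a' B := by
  ext i j; simp [htensL, sub_mul]

lemma htensR_sub_right (a a' : M4) (B : HChainOp m) :
    htensR B (a - a') = htensR B a - htensR B a' := by
  ext i j; simp [htensR, mul_sub]

lemma htensL_zero_left (B : HChainOp m) : htensL 0 B = 0 := by
  ext i j; simp [htensL]

lemma htensR_zero_right (B : HChainOp m) : htensR B 0 = 0 := by
  ext i j; simp [htensR]

lemma htensL_zero_right (a : M4) : htensL a (0 : HChainOp m) = 0 := by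
  ext i j; simp [htensL]

lemma htensR_zero_left (a : M4) : htensR (0 : HChainOp m) a = 0 := by
  ext i j; simp [htensR]

lemma htensR_neg_right (a : M4) (B : HChainOp m) : htensR B (-a) = -htensR B a := by
  ext i j; simp [htensR]

lemma commute_htensL_one {ℓ a : M4} (h : Commute ℓ a) (B : HChainOp m) :
    Commute (htensL ℓ 1) (htensL a B) := by
  rw [Commute, SemiconjBy, htensL_mul, htensL_mul, h.eq, one_mul, mul_one]

lemma commute_htensR_one {ℓ a : M4} (h : Commute ℓ a) (B : HChainOp m) :
    Commute (htensR 1 ℓ) (htensR B a) := by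
  rw [Commute, SemiconjBy, htensR_mul, htensR_mul, h.eq, one_mul, mul_one]

lemma drift_htensL_one (ℓ a : M4) (B : HChainOp m) :
    drift (htensL ℓ 1) (htensL a B) = htensL (drift ℓ a) B := by
  simp only [drift, star_eq_conjTranspose, htensL_conjTranspose, conjTranspose_one, htensL_mul,
    one_mul, mul_one, htensL_sub_left]

lemma drift_htensR_one (ℓ a : M4) (B : HChainOp m) :
    drift (htensR 1 ℓ) (htensR B a) = htensR B (drift ℓ a) := by
  simp only [drift, star_eq_conjTranspose, htensR_conjTranspose, conjTranspose_one, htensR_mul,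
    one_mul, mul_one, htensR_sub_right]

lemma piKron_eq_htensL (f : Fin (m + 1) → M4) :
    piKron f = htensL (f 0) (piKron fun y => f y.succ) := by
  ext i j; simp [piKron, htensL, Fin.prod_univ_succ]

lemma piKron_eq_htensR (f : Fin (m + 1) → M4) :
    piKron f = htensR (piKron fun y => f y.castSucc) (f (Fin.last m)) := by
  ext i j; simp [piKron, htensR, Fin.prod_univ_castSucc]

lemma piKron_mulSingle_zero (a : M4) :
    piKron (Pi.mulSingle (0 : Fin (m + 1)) a) = htensL a 1 := by
  have hrest : (fun y : Fin m => (Pi.mulSingle 0 a : Fin (m + 1) → M4) y.succ) = 1 :=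
    funext fun y => Pi.mulSingle_eq_of_ne (Fin.succ_ne_zero y) a
  rw [piKron_eq_htensL, Pi.mulSingle_eq_same, hrest, piKron_one]

lemma piKron_mulSingle_last (a : M4) : piKron (Pi.mulSingle (Fin.last m) a) = htensR 1 a := by
  have hrest : (fun y : Fin m => (Pi.mulSingle (Fin.last m) a : Fin (m + 1) → M4) y.castSucc) = 1 :=
    funext fun y => Pi.mulSingle_eq_of_ne (Fin.castSucc_lt_last y).ne _
  rw [piKron_eq_htensR, Pi.mulSingle_eq_same, hrest, piKron_one]

end Tensor

section Sites

variable {n : ℕ}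

lemma hsiteσ_conjTranspose (x : Fin n) (a : M2) : (hsiteσ x a)ᴴ = hsiteσ x aᴴ := by
  rw [hsiteσ_eq_piKron, hsiteσ_eq_piKron, piKron_conjTranspose]
  congr 1; funext y
  rw [Pi.apply_mulSingle (fun _ (M : M4) => Mᴴ) (fun _ => conjTranspose_one),
    conjTranspose_kronecker, conjTranspose_one]

lemma hsiteτ_conjTranspose (x : Fin n) (a : M2) : (hsiteτ x a)ᴴ = hsiteτ x aᴴ := by
  rw [hsiteτ_eq_piKron, hsiteτ_eq_piKron, piKron_conjTranspose]
  congr 1; funext y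
  rw [Pi.apply_mulSingle (fun _ (M : M4) => Mᴴ) (fun _ => conjTranspose_one),
    conjTranspose_kronecker, conjTranspose_one]

lemma conjTranspose_hsiteσ_mul_hsiteσ {x y : Fin n} (hxy : x ≠ y) (a b : M2) :
    (hsiteσ x a * hsiteσ y b)ᴴ = hsiteσ x aᴴ * hsiteσ y bᴴ := by
  rw [conjTranspose_mul, hsiteσ_conjTranspose, hsiteσ_conjTranspose, hsiteσ_eq_piKron,
    hsiteσ_eq_piKron, (commute_piKron_mulSingle hxy.symm _ _).eq]

lemma conjTranspose_hsiteτ_mul_hsiteτ {x y : Fin n} (hxy : x ≠ y) (a b : M2) :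
    (hsiteτ x a * hsiteτ y b)ᴴ = hsiteτ x aᴴ * hsiteτ y bᴴ := by
  rw [conjTranspose_mul, hsiteτ_conjTranspose, hsiteτ_conjTranspose, hsiteτ_eq_piKron,
    hsiteτ_eq_piKron, (commute_piKron_mulSingle hxy.symm _ _).eq]

lemma commute_hsiteσ_hsiteτ (x : Fin n) (a b : M2) : Commute (hsiteσ x a) (hsiteτ x b) := by
  rw [hsiteσ_eq_piKron, hsiteτ_eq_piKron]
  exact commute_piKron_mulSingle_same x (commute_kronecker (.one_right a) (.one_left b))

lemma hubbard_isSelfAdjoint (u : ℝ) : IsSelfAdjoint (Hubbard u n) := by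
  refine .add (isSelfAdjoint_sum _ fun x _ => ?_)
    (.smul (Complex.conj_ofReal u) (isSelfAdjoint_sum _ fun x _ => ?_))
  · split_ifs with h
    · have hne : x ≠ ⟨x + 1, h⟩ := Fin.ne_of_val_ne (Nat.succ_ne_self x).symm
      simp only [IsSelfAdjoint, star_add, star_smul, star_eq_conjTranspose,
        conjTranspose_hsiteσ_mul_hsiteσ hne, conjTranspose_hsiteτ_mul_hsiteτ hne,
        σp_conjTranspose, σm_conjTranspose, star_ofNat]
      abel
    · exact .zero _
  · have hσ : IsSelfAdjoint (hsiteσ x σz) := by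
      rw [IsSelfAdjoint, star_eq_conjTranspose, hsiteσ_conjTranspose, σz_conjTranspose]
    have hτ : IsSelfAdjoint (hsiteτ x σz) := by
      rw [IsSelfAdjoint, star_eq_conjTranspose, hsiteτ_conjTranspose, σz_conjTranspose]
    rw [IsSelfAdjoint, star_mul, hσ.star_eq, hτ.star_eq]
    exact (commute_hsiteσ_hsiteτ x σz σz).eq.symm

end Sites

section Boundary

variable {m : ℕ} {Ω : HChainOp (m + 1)}

lemma eq_htensL_of_upper {P : Fin 4 → Fin 4 → HChainOp m}
    (hP : ∀ s t : Fin 4, (s = 2 ∨ s = 3 ∨ t = 2 ∨ t = 3) → P s t = 0)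
    (hexpL : Ω = ∑ s : Fin 4, ∑ t : Fin 4, htensL (pauliJ s ⊗ₖ pauliJ t) (P s t)) :
    Ω = htensL (σ0 ⊗ₖ σ0) (P 0 0) + htensL (σ0 ⊗ₖ σp) (P 0 1)
      + htensL (σp ⊗ₖ σ0) (P 1 0) + htensL (σp ⊗ₖ σp) (P 1 1) := by
  simp [hexpL, Fin.sum_univ_four, pauliJ, hP, htensL_zero_right, add_assoc]

lemma eq_htensR_of_lower {Q : Fin 4 → Fin 4 → HChainOp m}
    (hQ : ∀ s t : Fin 4, (s = 1 ∨ s = 3 ∨ t = 1 ∨ t = 3) → Q s t = 0)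
    (hexpR : Ω = ∑ s : Fin 4, ∑ t : Fin 4, htensR (Q s t) (pauliJ s ⊗ₖ pauliJ t)) :
    Ω = htensR (Q 0 0) (σ0 ⊗ₖ σ0) + htensR (Q 0 2) (σ0 ⊗ₖ σm)
      + htensR (Q 2 0) (σm ⊗ₖ σ0) + htensR (Q 2 2) (σm ⊗ₖ σm) := by
  simp [hexpR, Fin.sum_univ_four, pauliJ, hQ, htensR_zero_left, add_assoc]

lemma commute_hsiteσ_zero_of_upper {P : Fin 4 → Fin 4 → HChainOp m}
    (hP : ∀ s t : Fin 4, (s = 2 ∨ s = 3 ∨ t = 2 ∨ t = 3) → P s t = 0)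
    (hexpL : Ω = ∑ s : Fin 4, ∑ t : Fin 4, htensL (pauliJ s ⊗ₖ pauliJ t) (P s t)) :
    Commute (hsiteσ 0 σp) Ω := by
  rw [hsiteσ_eq_piKron, piKron_mulSingle_zero, eq_htensL_of_upper hP hexpL]
  refine .add_right (.add_right (.add_right ?_ ?_) ?_) ?_ <;>
    refine commute_htensL_one (commute_kronecker ?_ (.one_left _)) _
  exacts [.one_right _, .one_right _, .refl _, .refl _]

lemma commute_hsiteτ_zero_of_upper {P : Fin 4 → Fin 4 → HChainOp m}
    (hP : ∀ s t : Fin 4, (s = 2 ∨ s = 3 ∨ t = 2 ∨ t = 3) → P s t = 0)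
    (hexpL : Ω = ∑ s : Fin 4, ∑ t : Fin 4, htensL (pauliJ s ⊗ₖ pauliJ t) (P s t)) :
    Commute (hsiteτ 0 σp) Ω := by
  rw [hsiteτ_eq_piKron, piKron_mulSingle_zero, eq_htensL_of_upper hP hexpL]
  refine .add_right (.add_right (.add_right ?_ ?_) ?_) ?_ <;>
    refine commute_htensL_one (commute_kronecker (.one_left _) ?_) _
  exacts [.one_right _, .refl _, .one_right _, .refl _]

lemma commute_hsiteσ_last_of_lower {Q : Fin 4 → Fin 4 → HChainOp m}
    (hQ : ∀ s t : Fin 4, (s = 1 ∨ s = 3 ∨ t = 1 ∨ t = 3) → Q s t = 0)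
    (hexpR : Ω = ∑ s : Fin 4, ∑ t : Fin 4, htensR (Q s t) (pauliJ s ⊗ₖ pauliJ t)) :
    Commute (hsiteσ (Fin.last m) σm) Ω := by
  rw [hsiteσ_eq_piKron, piKron_mulSingle_last, eq_htensR_of_lower hQ hexpR]
  refine .add_right (.add_right (.add_right ?_ ?_) ?_) ?_ <;>
    refine commute_htensR_one (commute_kronecker ?_ (.one_left _)) _
  exacts [.one_right _, .one_right _, .refl _, .refl _]

lemma commute_hsiteτ_last_of_lower {Q : Fin 4 → Fin 4 → HChainOp m}
    (hQ : ∀ s t : Fin 4, (s = 1 ∨ s = 3 ∨ t = 1 ∨ t = 3) → Q s t = 0)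
    (hexpR : Ω = ∑ s : Fin 4, ∑ t : Fin 4, htensR (Q s t) (pauliJ s ⊗ₖ pauliJ t)) :
    Commute (hsiteτ (Fin.last m) σm) Ω := by
  rw [hsiteτ_eq_piKron, piKron_mulSingle_last, eq_htensR_of_lower hQ hexpR]
  refine .add_right (.add_right (.add_right ?_ ?_) ?_) ?_ <;>
    refine commute_htensR_one (commute_kronecker (.one_left _) ?_) _
  exacts [.one_right _, .refl _, .one_right _, .refl _]

lemma drift_hsite_zero_of_upper {P : Fin 4 → Fin 4 → HChainOp m}
    (hP : ∀ s t : Fin 4, (s = 2 ∨ s = 3 ∨ t = 2 ∨ t = 3) → P s t = 0)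
    (hexpL : Ω = ∑ s : Fin 4, ∑ t : Fin 4, htensL (pauliJ s ⊗ₖ pauliJ t) (P s t)) :
    drift (hsiteσ 0 σp) Ω + drift (hsiteτ 0 σp) Ω
      = htensL (σz ⊗ₖ σ0) (P 0 0) + htensL (σ0 ⊗ₖ σz) (P 0 0)
        + htensL (σz ⊗ₖ σp) (P 0 1) + htensL (σp ⊗ₖ σz) (P 1 0) := by
  rw [hsiteσ_eq_piKron, hsiteτ_eq_piKron, piKron_mulSingle_zero, piKron_mulSingle_zero,
    eq_htensL_of_upper hP hexpL]
  simp only [drift_add, drift_htensL_one, drift_kronecker_one, drift_one_kronecker, drift_σp_σ0,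
    drift_σp_σp, zero_kronecker, kronecker_zero, htensL_zero_left, add_zero]
  abel

lemma drift_hsite_last_of_lower {Q : Fin 4 → Fin 4 → HChainOp m}
    (hQ : ∀ s t : Fin 4, (s = 1 ∨ s = 3 ∨ t = 1 ∨ t = 3) → Q s t = 0)
    (hexpR : Ω = ∑ s : Fin 4, ∑ t : Fin 4, htensR (Q s t) (pauliJ s ⊗ₖ pauliJ t)) :
    drift (hsiteσ (Fin.last m) σm) Ω + drift (hsiteτ (Fin.last m) σm) Ω
      = -htensR (Q 0 0) (σz ⊗ₖ σ0) - htensR (Q 0 0) (σ0 ⊗ₖ σz)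
        - htensR (Q 0 2) (σz ⊗ₖ σm) - htensR (Q 2 0) (σm ⊗ₖ σz) := by
  rw [hsiteσ_eq_piKron, hsiteτ_eq_piKron, piKron_mulSingle_last, piKron_mulSingle_last,
    eq_htensR_of_lower hQ hexpR]
  simp only [drift_add, drift_htensR_one, drift_kronecker_one, drift_one_kronecker, drift_σm_σ0,
    drift_σm_σm, zero_kronecker, kronecker_zero, neg_kronecker, kronecker_neg, htensR_zero_right,
    htensR_neg_right, add_zero]
  abel

end Boundary

theorem stmt16_general (m : ℕ) (u ε : ℝ)
    (Ω : HChainOp (m+1)) (P Q : Fin 4 → Fin 4 → HChainOp m)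
    (hP : ∀ s t : Fin 4, (s = 2 ∨ s = 3 ∨ t = 2 ∨ t = 3) → P s t = 0)
    (hQ : ∀ s t : Fin 4, (s = 1 ∨ s = 3 ∨ t = 1 ∨ t = 3) → Q s t = 0)
    (hexpL : Ω = ∑ s : Fin 4, ∑ t : Fin 4, htensL (pauliJ s ⊗ₖ pauliJ t) (P s t))
    (hexpR : Ω = ∑ s : Fin 4, ∑ t : Fin 4, htensR (Q s t) (pauliJ s ⊗ₖ pauliJ t))
    (hbulk : Hubbard (u:ℂ) (m+1) * Ω - Ω * Hubbard (u:ℂ) (m+1)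
      = (-(Complex.I) * (ε:ℂ)) •
          (htensL (σz ⊗ₖ σ0) (P 0 0) + htensL (σ0 ⊗ₖ σz) (P 0 0)
            - htensR (Q 0 0) (σz ⊗ₖ σ0) - htensR (Q 0 0) (σ0 ⊗ₖ σz)
            + htensL (σz ⊗ₖ σp) (P 0 1) + htensL (σp ⊗ₖ σz) (P 1 0)
            - htensR (Q 0 2) (σz ⊗ₖ σm) - htensR (Q 2 0) (σm ⊗ₖ σz))) :
    (-(Complex.I)) • (Hubbard (u:ℂ) (m+1) * (Ω * Ωᴴ) - (Ω * Ωᴴ) * Hubbard (u:ℂ) (m+1))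
      + (ε:ℂ) •
        (hDissip (hsiteσ (0 : Fin (m+1)) σp) (Ω * Ωᴴ)
          + hDissip (hsiteτ (0 : Fin (m+1)) σp) (Ω * Ωᴴ)
          + hDissip (hsiteσ (Fin.last m) σm) (Ω * Ωᴴ)
          + hDissip (hsiteτ (Fin.last m) σm) (Ω * Ωᴴ)) = 0 := by
  have hbulk_drift : Hubbard (u:ℂ) (m+1) * Ω - Ω * Hubbard (u:ℂ) (m+1) = (-Complex.I * ε) •
      (drift (hsiteσ 0 σp) Ω + drift (hsiteτ 0 σp) Ω
        + (drift (hsiteσ (Fin.last m) σm) Ω + drift (hsiteτ (Fin.last m) σm) Ω)) := by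
    rw [hbulk, drift_hsite_zero_of_upper hP hexpL, drift_hsite_last_of_lower hQ hexpR]
    congr 1; abel
  refine stationary_of_commutator_eq (hubbard_isSelfAdjoint u) ε hbulk_drift ?_
  rw [hDissip_mul_conjTranspose (commute_hsiteσ_zero_of_upper hP hexpL),
    hDissip_mul_conjTranspose (commute_hsiteτ_zero_of_upper hP hexpL),
    hDissip_mul_conjTranspose (commute_hsiteσ_last_of_lower hQ hexpR),
    hDissip_mul_conjTranspose (commute_hsiteτ_last_of_lower hQ hexpR)]
  simp only [star_eq_conjTranspose, add_mul, mul_add, conjTranspose_add]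
  abel

/-- if `Ω_n` satisfies the Hubbard bulk defining relation plus the
boundary (upper-triangularity) conditions, then `R = Ω_n Ω_n†` is a fixed point of the
symmetrically boundary driven Hubbard Lindbladian. -/
theorem stmt16 (m : ℕ) (hm : 1 ≤ m) (u ε : ℝ)
    (Ω : HChainOp (m+1)) (P Q : Fin 4 → Fin 4 → HChainOp m)
    (hP : ∀ s t : Fin 4, (s = 2 ∨ s = 3 ∨ t = 2 ∨ t = 3) → P s t = 0)
    (hQ : ∀ s t : Fin 4, (s = 1 ∨ s = 3 ∨ t = 1 ∨ t = 3) → Q s t = 0)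
    (hexpL : Ω = ∑ s : Fin 4, ∑ t : Fin 4, htensL (pauliJ s ⊗ₖ pauliJ t) (P s t))
    (hexpR : Ω = ∑ s : Fin 4, ∑ t : Fin 4, htensR (Q s t) (pauliJ s ⊗ₖ pauliJ t))
    (hbulk : Hubbard (u:ℂ) (m+1) * Ω - Ω * Hubbard (u:ℂ) (m+1)
      = (-(Complex.I) * (ε:ℂ)) •
          (htensL (σz ⊗ₖ σ0) (P 0 0) + htensL (σ0 ⊗ₖ σz) (P 0 0)
            - htensR (Q 0 0) (σz ⊗ₖ σ0) - htensR (Q 0 0) (σ0 ⊗ₖ σz)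
            + htensL (σz ⊗ₖ σp) (P 0 1) + htensL (σp ⊗ₖ σz) (P 1 0)
            - htensR (Q 0 2) (σz ⊗ₖ σm) - htensR (Q 2 0) (σm ⊗ₖ σz))) :
    (-(Complex.I)) • (Hubbard (u:ℂ) (m+1) * (Ω * Ωᴴ) - (Ω * Ωᴴ) * Hubbard (u:ℂ) (m+1))
      + (ε:ℂ) •
        (hDissip (hsiteσ (0 : Fin (m+1)) σp) (Ω * Ωᴴ)
          + hDissip (hsiteτ (0 : Fin (m+1)) σp) (Ω * Ωᴴ)
          + hDissip (hsiteσ (Fin.last m) σm) (Ω * Ωᴴ)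
          + hDissip (hsiteτ (Fin.last m) σm) (Ω * Ωᴴ)) = 0 :=
  stmt16_general m u ε Ω P Q hP hQ hexpL hexpR hbulk

end
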